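/- Successor isomorphism: Let A be a uniform chain of rank strictly between ω and ω·2, and let x, x' ∈ A. If both the ω-components of x and x' are n-successors in the quotient A/ω for some n < rk(A/ω) < ω, then the ω-component of x is order-isomorphic to the ω-component of x'. -/

import Mathlib

/-- All tails of `M` are isomorphic to all tails of `N`. -/
def TailsIso (M N : LinOrd) : Prop :=
  ∀ (x : M) (y : N), Nonempty ({z : M // x ≤ z} ≃o {z : N // y ≤ z})

/-- A chain is uniform if all of its tails are pairwise order-isomorphic. -/
def IsUniform (M : LinOrd) : Prop := TailsIso M M

/-- Component relations over a base equivalence: `compFrom C base 0 = base`, and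
`compFrom C base (n+1) x y` iff finitely many `compFrom C base n`-classes meet the
interval `[x, y]`.  With `base = Eq` this is the finite-level rank decomposition;
with `base` the `ω`-component relation it describes the quotient `A/ω`. -/
def compFrom (C : LinOrd) (base : C → C → Prop) : ℕ → C → C → Prop
  | 0 => base
  | n + 1 => fun x y => ∃ F : Finset C, ∀ z ∈ Set.uIcc x y, ∃ w ∈ F, compFrom C base n z w

/-- The `ω`-component relation: finitely many jumps apart at some finite level. -/
def compOmega (C : LinOrd) (x y : C) : Prop := ∃ n, compFrom C Eq n x y

/-- Relative to the base equivalence (level `0` of `A/ω`), the level-`n` class of `x`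
has an immediate predecessor inside its level-`(n+1)` class. -/
def HasPredFrom (C : LinOrd) (base : C → C → Prop) (n : ℕ) (x : C) : Prop :=
  ∃ y, y < x ∧ compFrom C base (n + 1) x y ∧ ¬ compFrom C base n x y ∧
    ∀ z, y < z → z < x → compFrom C base n z x ∨ compFrom C base n z y

/-- The `base`-class of `x` is an `n`-successor in the quotient by `base`. -/
def IsNSuccFrom (C : LinOrd) (base : C → C → Prop) (n : ℕ) (x : C) : Prop :=
  HasPredFrom C base n x ∧ ∀ m, m < n → ¬ HasPredFrom C base m x

/-!
Let `y`, `y'` be the predecessors witnessing that `x`, `x'` are `n`-successors, and let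
`g : [y, ∞) ≃o [y', ∞)` come from uniformity. Since `compFrom` and `compOmega` only look at the
interval between two points, `g` preserves them; so `g x` lies above `y' = g y` and is not
level-`n` related to it. If `g x < x'`, the predecessor property of `y'` therefore puts `g x` in
the level-`n` class of `x'`. As `x'` has no predecessor at any level `m < n`, each of its
level-`(m+1)` classes begins with its level-`m` class, and descending to level `0` puts `g x` in
the `ω`-component of `x'`. The case `x' < g x` is the same argument for `g⁻¹`. Hence `g` maps the
`ω`-component of `x` onto that of `x'`.
-/

structure IsConvexEquiv {α : Type*} [LE α] (r : α → α → Prop) : Prop extends Equivalence r where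
  convex : ∀ {a b c}, r a b → a ≤ c → c ≤ b → r a c

namespace IsConvexEquiv

variable {α : Type*} [LinearOrder α] {r : α → α → Prop}

theorem eq : IsConvexEquiv (Eq : α → α → Prop) where
  refl _ := rfl
  symm := Eq.symm
  trans := Eq.trans
  convex h hac hcb := le_antisymm hac (h ▸ hcb)

theorem lt_of_lt_of_not_rel (hr : IsConvexEquiv r) {a b a' b' : α} (hab : a < b)
    (hnab : ¬ r a b) (ha : r a' a) (hb : r b' b) : a' < b' := by
  by_contra! hle
  rcases le_or_gt b' a with h | h
  · exact hnab (hr.trans (hr.symm (hr.convex hb h hab.le)) hb)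
  · exact hnab (hr.trans (hr.convex (hr.symm ha) h.le hle) hb)

theorem lt_of_rel (hr : IsConvexEquiv r) {x y z : α} (hyx : y < x) (hxy : ¬ r x y)
    (hxz : r x z) : y < z :=
  hr.lt_of_lt_of_not_rel hyx (fun h => hxy (hr.symm h)) (hr.refl y) (hr.symm hxz)

theorem exists_mem_forall_lt_imp_rel (hr : IsConvexEquiv r) {F : Finset α} {S : Set α}
    (hS : S.Nonempty) (hF : ∀ z ∈ S, ∃ w ∈ F, r z w) :
    ∃ u ∈ S, ∀ v ∈ S, u < v → r u v := by
  classical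
  obtain ⟨z, hz⟩ := hS
  obtain ⟨w, hwF, hzw⟩ := hF z hz
  obtain ⟨w₀, hw₀, hmax⟩ := (F.filter fun w => ∃ u ∈ S, r u w).exists_max_image id
    ⟨w, Finset.mem_filter.2 ⟨hwF, z, hz, hzw⟩⟩
  obtain ⟨-, u, hu, huw₀⟩ := Finset.mem_filter.1 hw₀
  refine ⟨u, hu, fun v hv huv => by_contra fun hnuv => ?_⟩
  obtain ⟨w₁, hw₁F, hvw₁⟩ := hF v hv
  exact (hmax w₁ (Finset.mem_filter.2 ⟨hw₁F, v, hv, hvw₁⟩)).not_gt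
    (hr.lt_of_lt_of_not_rel huv hnuv (hr.symm huw₀) (hr.symm hvw₁))

end IsConvexEquiv

section compFrom

variable {C : LinOrd} {r : C → C → Prop}

theorem isConvexEquiv_compFrom (hr : IsConvexEquiv r) : ∀ n, IsConvexEquiv (compFrom C r n)
  | 0 => hr
  | n + 1 => by
    have ih := isConvexEquiv_compFrom hr n
    refine ⟨⟨fun a => ⟨{a}, fun z hz => ?_⟩, fun ⟨F, hF⟩ => ⟨F, fun z hz => hF z ?_⟩,
      fun ⟨F₁, hF₁⟩ ⟨F₂, hF₂⟩ => ⟨F₁ ∪ F₂, fun z hz => ?_⟩⟩,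
      fun ⟨F, hF⟩ hac hcb => ⟨F, fun z hz => hF z ?_⟩⟩
    · rw [Set.uIcc_self, Set.mem_singleton_iff] at hz
      exact ⟨a, Finset.mem_singleton_self a, hz ▸ ih.refl z⟩
    · rwa [Set.uIcc_comm]
    · rcases Set.uIcc_subset_uIcc_union_uIcc hz with hz | hz
      · obtain ⟨w, hw, hzw⟩ := hF₁ z hz
        exact ⟨w, Finset.mem_union_left _ hw, hzw⟩
      · obtain ⟨w, hw, hzw⟩ := hF₂ z hz
        exact ⟨w, Finset.mem_union_right _ hw, hzw⟩
    · exact Set.uIcc_subset_uIcc Set.left_mem_uIcc (Set.mem_uIcc.2 (.inl ⟨hac, hcb⟩)) hz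

theorem compFrom_succ_of_compFrom (hr : IsConvexEquiv r) {n : ℕ} {a b : C}
    (h : compFrom C r n a b) : compFrom C r (n + 1) a b := by
  have hn := isConvexEquiv_compFrom hr n
  refine ⟨{b}, fun z hz => ⟨b, Finset.mem_singleton_self b, ?_⟩⟩
  rcases Set.mem_uIcc.1 hz with ⟨haz, hzb⟩ | ⟨hbz, hza⟩
  · exact hn.trans (hn.symm (hn.convex h haz hzb)) h
  · exact hn.symm (hn.convex (hn.symm h) hbz hza)

theorem compFrom_mono (hr : IsConvexEquiv r) {m n : ℕ} (hmn : m ≤ n) {a b : C}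
    (h : compFrom C r m a b) : compFrom C r n a b := by
  induction n, hmn using Nat.le_induction with
  | base => exact h
  | succ n _ ih => exact compFrom_succ_of_compFrom hr ih

theorem isConvexEquiv_compOmega : IsConvexEquiv (compOmega C) where
  refl _ := ⟨0, rfl⟩
  symm := fun ⟨n, h⟩ => ⟨n, (isConvexEquiv_compFrom .eq n).symm h⟩
  trans := fun ⟨m, h₁⟩ ⟨n, h₂⟩ => ⟨max m n, (isConvexEquiv_compFrom .eq _).trans
    (compFrom_mono .eq (le_max_left m n) h₁) (compFrom_mono .eq (le_max_right m n) h₂)⟩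
  convex := fun ⟨n, h⟩ hac hcb => ⟨n, (isConvexEquiv_compFrom .eq n).convex h hac hcb⟩

/-- Otherwise the last level-`m` class meeting `[z, x]` before that of `x` is a predecessor. -/
theorem compFrom_of_not_hasPredFrom (hr : IsConvexEquiv r) {m : ℕ} {x z : C}
    (hnp : ¬ HasPredFrom C r m x) (hzx : z < x) (h : compFrom C r (m + 1) x z) :
    compFrom C r m x z := by
  have hm := isConvexEquiv_compFrom hr m
  have hm₁ := isConvexEquiv_compFrom hr (m + 1)
  by_contra hxz
  have ⟨F, hF⟩ := h
  obtain ⟨u, ⟨⟨hzu, hux⟩, hnux⟩, hlast⟩ :=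
    hm.exists_mem_forall_lt_imp_rel (S := Set.Icc z x ∩ {u | ¬ compFrom C r m u x})
      ⟨z, ⟨le_rfl, hzx.le⟩, fun h => hxz (hm.symm h)⟩ fun v hv => hF v (Set.Icc_subset_uIcc' hv.1)
  refine hnp ⟨u, hux.lt_of_ne fun h => hnux (h ▸ hm.refl u),
    hm₁.trans h (hm₁.convex (hm₁.symm h) hzu hux), fun h => hnux (hm.symm h), fun v huv hvx => ?_⟩
  by_cases hvx' : compFrom C r m v x
  · exact .inl hvx'
  · exact .inr (hm.symm (hlast v ⟨⟨hzu.trans huv.le, hvx.le⟩, hvx'⟩ huv))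

theorem rel_of_compFrom_of_forall_not_hasPredFrom (hr : IsConvexEquiv r) :
    ∀ {n : ℕ} {x z : C}, (∀ m < n, ¬ HasPredFrom C r m x) → z < x → compFrom C r n x z → r x z
  | 0, _, _, _, _, h => h
  | n + 1, _, _, hnp, hzx, h =>
    rel_of_compFrom_of_forall_not_hasPredFrom hr (fun m hm => hnp m (hm.trans n.lt_succ_self))
      hzx (compFrom_of_not_hasPredFrom hr (hnp n n.lt_succ_self) hzx h)

end compFrom

section Embedding

variable {C : LinOrd} {α : Type*} [LinearOrder α] {r : C → C → Prop}

theorem compFrom_of_compFrom_of_orderEmbedding (hr : IsConvexEquiv r) {f₁ f₂ : α ↪o C}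
    (hf₂ : (Set.range f₂).OrdConnected) (hbase : ∀ u v, r (f₁ u) (f₁ v) → r (f₂ u) (f₂ v)) :
    ∀ (n : ℕ) (u v : α), compFrom C r n (f₁ u) (f₁ v) → compFrom C r n (f₂ u) (f₂ v)
  | 0 => hbase
  | n + 1 => by
    classical
    have hn := isConvexEquiv_compFrom hr n
    rintro u v ⟨F, hF⟩
    -- `F` may leave the range of `f₂`: move each `w ∈ F` whose class meets the range of `f₁`
    -- to the `f₂`-image of an `f₁`-point of that class
    let pick (w : C) : C := if h : ∃ p, compFrom C r n (f₁ p) w then f₂ h.choose else w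
    refine ⟨F.image pick, fun z hz => ?_⟩
    obtain ⟨z, rfl⟩ := hf₂.uIcc_subset (Set.mem_range_self u) (Set.mem_range_self v) hz
    have hz₁ : f₁ z ∈ Set.uIcc (f₁ u) (f₁ v) := by
      simpa only [Set.mem_uIcc, OrderEmbedding.le_iff_le] using hz
    obtain ⟨w, hwF, hzw⟩ := hF _ hz₁
    have hex : ∃ p, compFrom C r n (f₁ p) w := ⟨z, hzw⟩
    refine ⟨pick w, Finset.mem_image_of_mem _ hwF, ?_⟩
    simp only [pick, dif_pos hex]
    exact compFrom_of_compFrom_of_orderEmbedding hr hf₂ hbase n z hex.choose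
      (hn.trans hzw (hn.symm hex.choose_spec))

end Embedding

section Tail

variable {C : LinOrd} {a b : C}

theorem ordConnected_range_tailIso (g : {z : C // a ≤ z} ≃o {z : C // b ≤ z}) :
    (Set.range (g.toOrderEmbedding.trans (OrderEmbedding.subtype (b ≤ ·)))).OrdConnected := by
  have hrange : Set.range (g.toOrderEmbedding.trans (OrderEmbedding.subtype (b ≤ ·))) =
      Set.Ici b := by
    ext z
    refine ⟨fun ⟨u, hu⟩ => hu ▸ (g u).2, fun hz => ⟨g.symm ⟨z, hz⟩, ?_⟩⟩
    simp
  exact hrange ▸ Set.ordConnected_Ici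

theorem compFrom_tailIso_iff {r : C → C → Prop} (hr : IsConvexEquiv r)
    (g : {z : C // a ≤ z} ≃o {z : C // b ≤ z}) (hbase : ∀ u v, r u.1 v.1 ↔ r (g u).1 (g v).1)
    (n : ℕ) (u v : {z : C // a ≤ z}) :
    compFrom C r n u.1 v.1 ↔ compFrom C r n (g u).1 (g v).1 :=
  ⟨compFrom_of_compFrom_of_orderEmbedding
      (f₁ := (OrderIso.refl _).toOrderEmbedding.trans (OrderEmbedding.subtype (a ≤ ·)))
      hr (ordConnected_range_tailIso g) (fun u v => (hbase u v).1) n u v,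
    compFrom_of_compFrom_of_orderEmbedding
      (f₁ := g.toOrderEmbedding.trans (OrderEmbedding.subtype (b ≤ ·)))
      hr (ordConnected_range_tailIso (OrderIso.refl _)) (fun u v => (hbase u v).2) n u v⟩

theorem compOmega_tailIso_iff (g : {z : C // a ≤ z} ≃o {z : C // b ≤ z})
    (u v : {z : C // a ≤ z}) : compOmega C u.1 v.1 ↔ compOmega C (g u).1 (g v).1 :=
  exists_congr fun n => compFrom_tailIso_iff .eq g
    (fun u v => by rw [← Subtype.ext_iff, ← Subtype.ext_iff, g.apply_eq_iff_eq]) n u v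

theorem compFrom_compOmega_tailIso_iff (g : {z : C // a ≤ z} ≃o {z : C // b ≤ z}) (n : ℕ)
    (u v : {z : C // a ≤ z}) :
    compFrom C (compOmega C) n u.1 v.1 ↔ compFrom C (compOmega C) n (g u).1 (g v).1 :=
  compFrom_tailIso_iff isConvexEquiv_compOmega g (compOmega_tailIso_iff g) n u v

theorem tailIso_apply_bot (g : {z : C // a ≤ z} ≃o {z : C // b ≤ z}) :
    g ⟨a, le_rfl⟩ = ⟨b, le_rfl⟩ :=
  g.map_bot' (fun u => u.2) (fun v => v.2)

theorem compOmega_of_tailIso_apply_le {n : ℕ} {x' : C}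
    (g : {z : C // a ≤ z} ≃o {z : C // b ≤ z}) (x : {z : C // a ≤ z})
    (hxa : ¬ compFrom C (compOmega C) n x.1 a)
    (hx' : ∀ m < n, ¬ HasPredFrom C (compOmega C) m x')
    (hbetween : ∀ z, b < z → z < x' →
      compFrom C (compOmega C) n z x' ∨ compFrom C (compOmega C) n z b)
    (hle : (g x).1 ≤ x') : compOmega C x' (g x).1 := by
  have hω : IsConvexEquiv (compOmega C) := isConvexEquiv_compOmega
  have hn := isConvexEquiv_compFrom hω n
  have hgxb : ¬ compFrom C (compOmega C) n (g x).1 b := by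
    have := (compFrom_compOmega_tailIso_iff g n x ⟨a, le_rfl⟩).not.mp hxa
    rwa [tailIso_apply_bot] at this
  rcases hle.lt_or_eq with hlt | heq
  · have hbgx : b < (g x).1 := (g x).2.lt_of_ne fun h => hgxb (h ▸ hn.refl b)
    exact rel_of_compFrom_of_forall_not_hasPredFrom hω hx' hlt
      (hn.symm ((hbetween _ hbgx hlt).resolve_right hgxb))
  · exact heq ▸ hω.refl _

end Tail

theorem nonempty_orderIso_of_tailIso {α : Type*} [LinearOrder α] {a b : α}
    (g : {z : α // a ≤ z} ≃o {z : α // b ≤ z}) {p q : α → Prop} (hp : ∀ z, p z → a ≤ z)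
    (hq : ∀ z, q z → b ≤ z) (hpq : ∀ u, p u.1 ↔ q (g u).1) :
    Nonempty ({z // p z} ≃o {z // q z}) := by
  refine ⟨StrictMono.orderIsoOfSurjective (fun z => ⟨(g ⟨z.1, hp z.1 z.2⟩).1, (hpq _).1 z.2⟩)
    (fun z w hzw => ?_) fun w => ?_⟩
  · exact g.strictMono (Subtype.mk_lt_mk.2 hzw)
  · have hw := (hpq (g.symm ⟨w.1, hq w.1 w.2⟩)).2 (by simpa using w.2)
    exact ⟨⟨_, hw⟩, by simp⟩

theorem successor_isomorphism_general (A : LinOrd) (hA : IsUniform A) (n : ℕ) (x x' : A)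
    (hx : IsNSuccFrom A (compOmega A) n x) (hx' : IsNSuccFrom A (compOmega A) n x') :
    Nonempty ({y : A // compOmega A x y} ≃o {y : A // compOmega A x' y}) := by
  have hω : IsConvexEquiv (compOmega A) := isConvexEquiv_compOmega
  obtain ⟨y, hyx, -, hxy, hbetween⟩ := hx.1
  obtain ⟨y', hyx', -, hxy', hbetween'⟩ := hx'.1
  obtain ⟨g⟩ := hA y y'
  let xT : {z // y ≤ z} := ⟨x, hyx.le⟩
  let xT' : {z // y' ≤ z} := ⟨x', hyx'.le⟩
  have hgx : compOmega A x' (g xT).1 := by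
    rcases le_total (g xT).1 x' with hle | hle
    · exact compOmega_of_tailIso_apply_le g xT hxy hx'.2 hbetween' hle
    · have hle' : g.symm xT' ≤ xT := by
        simpa using g.symm.monotone (show xT' ≤ g xT from hle)
      have := compOmega_of_tailIso_apply_le g.symm xT' hxy' hx.2 hbetween hle'
      exact hω.symm (by simpa [xT'] using (compOmega_tailIso_iff g xT (g.symm xT')).1 this)
  have hbelow {c z : A} (hcz : c < z) (hzc : ¬ compFrom A (compOmega A) n z c) (w : A) :
      compOmega A z w → c ≤ w :=
    fun hzw => (hω.lt_of_rel hcz (fun h => hzc (compFrom_mono hω n.zero_le h)) hzw).le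
  exact nonempty_orderIso_of_tailIso g (hbelow hyx hxy) (hbelow hyx' hxy')
    fun u => (compOmega_tailIso_iff g xT u).trans ⟨hω.trans hgx, hω.trans (hω.symm hgx)⟩

/-- successor isomorphism: let `A` be a uniform chain of rank strictly
between `ω` and `ω·2` (i.e. `A` has at least two `ω`-components, and the quotient
`A/ω` has finite rank).  If the `ω`-components of `x` and `x'` are both `n`-successors
in `A/ω` for some `n < rk(A/ω) < ω`, then the `ω`-component of `x` is
order-isomorphic to the `ω`-component of `x'`. -/
theorem successor_isomorphism (A : LinOrd) (hA : IsUniform A)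
    (hrk_gt : ∃ x y : A, ¬ compOmega A x y)
    (hrk_lt : {m : ℕ | ∀ x y : A, compFrom A (compOmega A) m x y}.Nonempty)
    (n : ℕ) (hn : n < sInf {m : ℕ | ∀ x y : A, compFrom A (compOmega A) m x y})
    (x x' : A)
    (hx : IsNSuccFrom A (compOmega A) n x) (hx' : IsNSuccFrom A (compOmega A) n x') :
    Nonempty ({y : A // compOmega A x y} ≃o {y : A // compOmega A x' y}) :=
  successor_isomorphism_general A hA n x x' hx hx'
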